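/- Let n ≥ 1 be an integer, θ ∈ (0, π/2), and let K be a θ-capillary convex body in ℝ^{n+1}. Then the maximum of the support function h_K over the unit sphere is attained at some unit vector u₀ with either (u₀)_{n+1} > cos θ or (u₀)_{n+1} = 0; in particular, for every unit vector u with u_{n+1} = cos θ one has h_K(u) < max_{|v|=1} h_K(v), i.e., the maximum is never attained on the circle {u : |u| = 1, u_{n+1} = cos θ}. -/
import Mathlib


open MeasureTheory Real Set
open scoped RealInnerProductSpace

noncomputable section

abbrev V (n : ℕ) := EuclideanSpace ℝ (Fin (n + 1))

/-- The vertical unit vector `E_{n+1}`. -/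
def Etop (n : ℕ) : V n := EuclideanSpace.single (Fin.last n) 1

/-- The spherical cap `S^n_θ`. -/
def sphCap (n : ℕ) (θ : ℝ) : Set (V n) :=
  {u | ‖u‖ = 1 ∧ Real.cos θ ≤ u (Fin.last n)}

/-- The boundary circle `∂S^n_θ`. -/
def sphCapBdry (n : ℕ) (θ : ℝ) : Set (V n) :=
  {u | ‖u‖ = 1 ∧ u (Fin.last n) = Real.cos θ}

/-- The capillary cap `C_θ`. -/
def capCap (n : ℕ) (θ : ℝ) : Set (V n) :=
  {ζ | 0 ≤ ζ (Fin.last n) ∧ ‖ζ + Real.cos θ • Etop n‖ = 1}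

/-- The open cone over `S^n_θ`. -/
def coneCap (n : ℕ) (θ : ℝ) : Set (V n) :=
  {x | ∃ l : ℝ, 0 < l ∧ ∃ u ∈ sphCap n θ, x = l • u}

/-- `G` is a positively 1-homogeneous extension of `g : C_θ → ℝ` which is `C^m` on an
open neighborhood of the cone over `S^n_θ`. -/
def IsHomExt (n : ℕ) (θ : ℝ) (m : ℕ∞) (g G : V n → ℝ) : Prop :=
  (∃ U : Set (V n), IsOpen U ∧ coneCap n θ ⊆ U ∧ ContDiffOn ℝ m G U) ∧
  (∀ l : ℝ, 0 < l → ∀ u ∈ sphCap n θ, G (l • u) = l * G u) ∧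
  (∀ ζ ∈ capCap n θ, G (ζ + Real.cos θ • Etop n) = g ζ)

/-- The Hessian of `G` at `u` as a quadratic/bilinear form. -/
def hessQ (n : ℕ) (G : V n → ℝ) (u v w : V n) : ℝ :=
  fderiv ℝ (fderiv ℝ G) u v w

/-- The Hessian matrix `D²G(u)` in the standard coordinates. -/
def hessM (n : ℕ) (G : V n → ℝ) (u : V n) : Matrix (Fin (n + 1)) (Fin (n + 1)) ℝ :=
  fun i j => fderiv ℝ (fderiv ℝ G) u (EuclideanSpace.single i 1) (EuclideanSpace.single j 1)

/-- `σ_j` of the eigenvalues of `D²G(u)` (via characteristic polynomial coefficients). -/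
def sigmaElem (n : ℕ) (j : ℕ) (G : V n → ℝ) (u : V n) : ℝ :=
  (-1 : ℝ) ^ j * ((hessM n G u).charpoly.coeff (n + 1 - j))

/-- `τ[g] ≥ 0` : the Hessian of the extension is positive semidefinite on `S^n_θ`. -/
def TauNonneg (n : ℕ) (θ : ℝ) (G : V n → ℝ) : Prop :=
  ∀ u ∈ sphCap n θ, ∀ v : V n, 0 ≤ hessQ n G u v v

/-- `τ[g] > 0`. -/
def TauPos (n : ℕ) (θ : ℝ) (G : V n → ℝ) : Prop :=
  TauNonneg n θ G ∧
  ∀ u ∈ sphCap n θ, ∀ v : V n, v ≠ 0 → ⟪v, u⟫ = 0 → 0 < hessQ n G u v v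

/-- Capillary (Robin) boundary condition: `∂_{n+1}G = 0` on `∂S^n_θ`. -/
def IsCapillaryF (n : ℕ) (θ : ℝ) (G : V n → ℝ) : Prop :=
  ∀ u ∈ sphCapBdry n θ, fderiv ℝ G u (Etop n) = 0

/-- Reflection negating the horizontal coordinates. -/
def horizNeg (n : ℕ) (ζ : V n) : V n := (2 * ζ (Fin.last n)) • Etop n - ζ

/-- Support function of a set. -/
def suppFn (n : ℕ) (K : Set (V n)) (u : V n) : ℝ := sSup ((fun y => ⟪u, y⟫) '' K)

/-- Relative interior (within the hyperplane `{x_{n+1}=0}`) of the base `K ∩ {x_{n+1}=0}`. -/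
def relintBase (n : ℕ) (K : Set (V n)) : Set (V n) :=
  {x | x (Fin.last n) = 0 ∧ ∃ ε > 0, ∀ y : V n, y (Fin.last n) = 0 → ‖y - x‖ < ε → y ∈ K}

/-- A `θ`-capillary convex body. -/
def IsCapBody (n : ℕ) (θ : ℝ) (K : Set (V n)) : Prop :=
  IsCompact K ∧ Convex ℝ K ∧ (interior K).Nonempty ∧
  (∀ x ∈ K, 0 ≤ x (Fin.last n)) ∧
  (∀ x ∈ K, 0 < x (Fin.last n) → ∀ u : V n, ‖u‖ = 1 → ⟪u, x⟫ = suppFn n K u →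
    Real.cos θ ≤ u (Fin.last n)) ∧
  (∀ v : V n, ‖v‖ = 1 → v (Fin.last n) = 0 →
    suppFn n K (Real.sin θ • v + Real.cos θ • Etop n) = Real.sin θ * suppFn n K v) ∧
  (relintBase n K).Nonempty

/-- `ψ` is one of `x²`, `x^p (p<0)`, `-log x`. -/
def PsiOK (ψ : ℝ → ℝ) : Prop :=
  (ψ = fun x : ℝ => x ^ 2) ∨ (∃ p : ℝ, p < 0 ∧ ψ = fun x : ℝ => x ^ p) ∨
    (ψ = fun x : ℝ => -Real.log x)



section SuppHelpers

variable {n : ℕ} {K : Set (V n)}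

lemma mem_le_suppFn (hc : IsCompact K) (u : V n) {z : V n} (hz : z ∈ K) :
    ⟪u, z⟫ ≤ suppFn n K u := by
  apply le_csSup
  · exact (hc.image (continuous_const.inner continuous_id)).bddAbove
  · exact Set.mem_image_of_mem _ hz

lemma suppFn_exists (hc : IsCompact K) (hne : K.Nonempty) (u : V n) :
    ∃ y ∈ K, ⟪u, y⟫ = suppFn n K u := by
  have hcont : Continuous fun z : V n => ⟪u, z⟫ := continuous_const.inner continuous_id
  obtain ⟨y, hyK, hmaxy⟩ := hc.exists_isMaxOn hne hcont.continuousOn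
  refine ⟨y, hyK, ?_⟩
  have hg : IsGreatest ((fun z => ⟪u, z⟫) '' K) ⟪u, y⟫ := by
    constructor
    · exact Set.mem_image_of_mem _ hyK
    · rintro _ ⟨z, hz, rfl⟩
      exact hmaxy hz
  exact (hg.csSup_eq).symm

lemma suppFn_lipschitz_bound (hc : IsCompact K) (hne : K.Nonempty)
    {R : ℝ} (hR : ∀ z ∈ K, ‖z‖ ≤ R) (u u' : V n) :
    suppFn n K u ≤ suppFn n K u' + R * ‖u - u'‖ := by
  apply csSup_le (hne.image _)
  rintro _ ⟨z, hz, rfl⟩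
  have h1 : ⟪u - u', z⟫ ≤ ‖u - u'‖ * ‖z‖ := real_inner_le_norm _ _
  have h2 : ‖z‖ ≤ R := hR z hz
  have h3 : ⟪u', z⟫ ≤ suppFn n K u' := mem_le_suppFn hc u' hz
  have h4 : ⟪u, z⟫ = ⟪u', z⟫ + ⟪u - u', z⟫ := by
    rw [inner_sub_left]; ring
  nlinarith [norm_nonneg (u - u'), norm_nonneg z]

lemma suppFn_continuous (hc : IsCompact K) (hne : K.Nonempty) :
    Continuous (suppFn n K) := by
  obtain ⟨R, hR⟩ := hc.isBounded.exists_norm_le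
  have hR0 : 0 ≤ R := le_trans (norm_nonneg _) (hR _ hne.some_mem)
  have : LipschitzWith (Real.toNNReal R) (suppFn n K) := by
    apply LipschitzWith.of_dist_le_mul
    intro u u'
    rw [Real.dist_eq, abs_sub_le_iff]
    constructor
    · have := suppFn_lipschitz_bound hc hne hR u u'
      rw [dist_eq_norm]
      rw [Real.coe_toNNReal R hR0]
      linarith
    · have := suppFn_lipschitz_bound hc hne hR u' u
      rw [dist_eq_norm, ← norm_neg (u - u')]
      rw [Real.coe_toNNReal R hR0]
      simp only [neg_sub]
      linarith
  exact this.continuous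

lemma Etop_last (n : ℕ) : Etop n (Fin.last n) = 1 := by
  simp [Etop, EuclideanSpace.single_apply]

lemma Etop_norm (n : ℕ) : ‖Etop n‖ = 1 := by
  rw [Etop, EuclideanSpace.norm_single]; simp

lemma inner_Etop_right (n : ℕ) (x : V n) : ⟪x, Etop n⟫ = x (Fin.last n) := by
  rw [Etop, EuclideanSpace.inner_single_right]; simp

end SuppHelpers

/-- the maximum of the support function of a capillary convex body
is never attained on the contact circle. -/
theorem capillary_support_max_location (n : ℕ) (hn : 1 ≤ n) (θ : ℝ)
    (hθ : θ ∈ Ioo 0 (π / 2)) (K : Set (V n)) (hK : IsCapBody n θ K) :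
    ∃ u₀ : V n, ‖u₀‖ = 1 ∧
      (Real.cos θ < u₀ (Fin.last n) ∨ u₀ (Fin.last n) = 0) ∧
      (∀ v : V n, ‖v‖ = 1 → suppFn n K v ≤ suppFn n K u₀) ∧
      (∀ u : V n, ‖u‖ = 1 → u (Fin.last n) = Real.cos θ →
        suppFn n K u < suppFn n K u₀) := by
  obtain ⟨hcomp, hconv, hint, hnn, hcond1, hcond2, hbase⟩ := hK
  obtain ⟨x₀, hx0last, ε, hε, hball⟩ := hbase
  have hKne : K.Nonempty := ⟨x₀, hball x₀ hx0last (by simpa using hε)⟩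
  have hθ1 : (0:ℝ) < θ := hθ.1
  have hθ2 : θ < π / 2 := hθ.2
  have hcos : 0 < Real.cos θ := Real.cos_pos_of_mem_Ioo ⟨by linarith [Real.pi_pos], hθ2⟩
  have hsin : 0 < Real.sin θ := Real.sin_pos_of_pos_of_lt_pi hθ1 (by linarith [Real.pi_pos])
  have hsin1 : Real.sin θ < 1 := by
    nlinarith [Real.sin_sq_add_cos_sq θ]
  -- the maximizer over the sphere
  have hsph : IsCompact (Metric.sphere (0 : V n) 1) := isCompact_sphere 0 1
  have hsne : (Metric.sphere (0 : V n) 1).Nonempty :=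
    ⟨Etop n, by simp [mem_sphere_zero_iff_norm, Etop_norm]⟩
  obtain ⟨u₀, hu₀s, hmaxu⟩ := hsph.exists_isMaxOn hsne
    (suppFn_continuous hcomp hKne).continuousOn
  have hu₀ : ‖u₀‖ = 1 := mem_sphere_zero_iff_norm.mp hu₀s
  have hle : ∀ v : V n, ‖v‖ = 1 → suppFn n K v ≤ suppFn n K u₀ := fun v hv =>
    hmaxu (mem_sphere_zero_iff_norm.mpr hv)
  set M := suppFn n K u₀ with hM
  -- M > 0
  have hlast_ne : Fin.last n ≠ (0 : Fin (n+1)) := by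
    intro h
    have := congrArg Fin.val h
    simp [Fin.last] at this
    omega
  have hMpos : 0 < M := by
    set v : V n := EuclideanSpace.single (0 : Fin (n+1)) 1 with hv
    have hvnorm : ‖v‖ = 1 := by rw [hv, EuclideanSpace.norm_single]; simp
    have hvlast : v (Fin.last n) = 0 := by
      rw [hv, EuclideanSpace.single_apply, if_neg hlast_ne]
    have hp1 : x₀ + (ε/2) • v ∈ K := by
      apply hball
      · simp [hvlast, hx0last]
      · have : x₀ + (ε/2) • v - x₀ = (ε/2) • v := by abel
        rw [this, norm_smul, hvnorm, Real.norm_eq_abs, abs_of_pos (by linarith)]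
        linarith
    have hp2 : x₀ - (ε/2) • v ∈ K := by
      apply hball
      · simp [hvlast, hx0last]
      · have : x₀ - (ε/2) • v - x₀ = -((ε/2) • v) := by abel
        rw [this, norm_neg, norm_smul, hvnorm, Real.norm_eq_abs, abs_of_pos (by linarith)]
        linarith
    have hvv : ⟪v, v⟫ = 1 := by
      rw [real_inner_self_eq_norm_sq, hvnorm]; norm_num
    have h1 : ⟪v, x₀⟫ + ε/2 ≤ suppFn n K v := by
      have := mem_le_suppFn hcomp v hp1
      rwa [inner_add_right, real_inner_smul_right, hvv, mul_one] at this
    have h2 : -⟪v, x₀⟫ + ε/2 ≤ suppFn n K (-v) := by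
      have := mem_le_suppFn hcomp (-v) hp2
      rw [inner_sub_right, real_inner_smul_right, inner_neg_left, inner_neg_left, hvv] at this
      linarith
    have h3 := hle v hvnorm
    have h4 := hle (-v) (by rw [norm_neg]; exact hvnorm)
    linarith
  -- strictness on the contact circle
  have hstrict : ∀ u : V n, ‖u‖ = 1 → u (Fin.last n) = Real.cos θ →
      suppFn n K u < M := by
    intro u hu hul
    set d : V n := u - Real.cos θ • Etop n with hd
    have hdnormsq : ‖d‖ ^ 2 = Real.sin θ ^ 2 := by
      rw [hd, norm_sub_sq_real, real_inner_smul_right, inner_Etop_right, hul, norm_smul,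
        Etop_norm, hu, Real.norm_eq_abs, abs_of_pos hcos]
      nlinarith [Real.sin_sq_add_cos_sq θ]
    have hdnorm : ‖d‖ = Real.sin θ := by
      nlinarith [norm_nonneg d]
    set v : V n := (Real.sin θ)⁻¹ • d with hv
    have hvnorm : ‖v‖ = 1 := by
      rw [hv, norm_smul, hdnorm, Real.norm_eq_abs, abs_of_pos (inv_pos.mpr hsin)]
      field_simp
    have hvlast : v (Fin.last n) = 0 := by
      have hdl : d (Fin.last n) = 0 := by
        rw [hd]
        simp [Etop_last, hul]
      rw [hv]
      simp [hdl]
    have hrec : Real.sin θ • v + Real.cos θ • Etop n = u := by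
      rw [hv, smul_smul, mul_inv_cancel₀ (ne_of_gt hsin), one_smul, hd]
      abel
    have hkey : suppFn n K u = Real.sin θ * suppFn n K v := by
      rw [← hrec]
      exact hcond2 v hvnorm hvlast
    rcases le_or_gt (suppFn n K v) 0 with hc | hc
    · have : suppFn n K u ≤ 0 := by
        rw [hkey]; exact mul_nonpos_of_nonneg_of_nonpos (le_of_lt hsin) hc
      linarith
    · have h5 : suppFn n K u < suppFn n K v := by
        rw [hkey]; nlinarith
      exact lt_of_lt_of_le h5 (hle v hvnorm)
  -- location of the maximizer
  refine ⟨u₀, hu₀, ?_, hle, hstrict⟩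
  obtain ⟨y, hyK, hy_eq⟩ := suppFn_exists hcomp hKne u₀
  rcases (hnn y hyK).lt_or_eq with hy | hy
  · left
    have hge : Real.cos θ ≤ u₀ (Fin.last n) := hcond1 y hyK hy u₀ hu₀ hy_eq
    rcases hge.lt_or_eq with h | h
    · exact h
    · exact absurd (hstrict u₀ hu₀ h.symm) (lt_irrefl M)
  · right
    by_contra ht
    set c := u₀ (Fin.last n) with hc
    set w : V n := u₀ - c • Etop n with hw
    have hwy : ⟪w, y⟫ = M := by
      rw [hw, inner_sub_left, real_inner_smul_left]
      have : ⟪Etop n, y⟫ = y (Fin.last n) := by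
        rw [real_inner_comm, inner_Etop_right]
      rw [this, ← hy, hy_eq]
      ring
    have hwsq : ‖w‖ ^ 2 = 1 - c ^ 2 := by
      rw [hw, norm_sub_sq_real, real_inner_smul_right, inner_Etop_right, ← hc, norm_smul,
        Etop_norm, hu₀, Real.norm_eq_abs]
      rw [mul_one, sq_abs]
      ring
    have hwne : w ≠ 0 := by
      intro h
      rw [h, inner_zero_left] at hwy
      linarith
    have hwpos : 0 < ‖w‖ := norm_pos_iff.mpr hwne
    have hwlt : ‖w‖ < 1 := by
      have hc2 : 0 < c ^ 2 := by positivity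
      nlinarith
    set v : V n := ‖w‖⁻¹ • w with hv
    clear_value w
    have hvnorm : ‖v‖ = 1 := by
      rw [hv, norm_smul, Real.norm_eq_abs, abs_of_pos (inv_pos.mpr hwpos)]
      field_simp
    have h6 : ⟪v, y⟫ ≤ M := le_trans (mem_le_suppFn hcomp v hyK) (hle v hvnorm)
    have h7 : ⟪v, y⟫ = ‖w‖⁻¹ * M := by
      rw [hv, real_inner_smul_left, hwy]
    rw [h7] at h6
    have h8 := mul_le_mul_of_nonneg_left h6 (le_of_lt hwpos)
    rw [← mul_assoc, mul_inv_cancel₀ (ne_of_gt hwpos), one_mul] at h8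
    have h9 : 0 < (1 - ‖w‖) * M := mul_pos (by linarith) hMpos
    rw [sub_mul, one_mul] at h9
    linarith
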